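/- arXiv:0808.2614 — 2 statements merged into one kernel-verified Lean document; each statement's English description precedes it below -/
import Mathlib

section
/- Let 1 ≤ ℓ ≤ n, let j ∈ {1,…,n}, and let f : ℝⁿ → ℝ be continuous with compact support. Define (Tf)(x) = ∫_{ℝⁿ} G_ℓ(x,y)(x_j − y_j) f(y) dy. If x does not belong to ⋃_{y ∈ supp f} convexHull({y} ∪ supp θ) (the starlike hull of supp f with respect to supp θ), then (Tf)(x) = 0. In particular, if Ω ⊆ ℝⁿ is a bounded open set starlike with respect to an open ball B with supp θ ⊆ B, and supp f ⊆ closure(Ω), then supp(Tf) ⊆ closure(Ω). -/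
/-! `G_m(x,y)` only sees `θ` on the ray from `y` through `x` beyond `x`, so
`G_m(x,y) = 0` unless `x` lies in the convex hull of `{y} ∪ supp θ`. The second claim follows
because the closure of a domain starlike with respect to `B` is again starlike with respect to `B`. -/

open MeasureTheory Set

noncomputable section

/-- The kernel `G_m(x,y) = ∫₁^∞ (t−1)^{n−m} t^{m−1} θ(y + t(x−y)) dt`. -/
def Gker {n : ℕ} (θ : EuclideanSpace ℝ (Fin n) → ℝ) (m : ℕ)
    (x y : EuclideanSpace ℝ (Fin n)) : ℝ :=
  ∫ t in Set.Ioi (1 : ℝ), (t - 1) ^ (n - m) * t ^ (m - 1) * θ (y + t • (x - y))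

def IsStarlikeWrt {E : Type*} [AddCommGroup E] [Module ℝ E] (Ω B : Set E) : Prop :=
  ∀ z ∈ Ω, convexHull ℝ ({z} ∪ B) ⊆ Ω

section Starlike

variable {E : Type*} [AddCommGroup E] [Module ℝ E]

lemma mem_segment_add_smul_sub_of_one_le (x y : E) {t : ℝ} (ht : 1 ≤ t) :
    x ∈ segment ℝ y (y + t • (x - y)) := by
  have ht0 : t ≠ 0 := by positivity
  refine ⟨1 - t⁻¹, t⁻¹, by linarith [inv_le_one_of_one_le₀ ht], by positivity, by ring, ?_⟩
  match_scalars <;> field_simp; ring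

lemma IsStarlikeWrt.mono {Ω B B' : Set E} (h : IsStarlikeWrt Ω B) (hB : B' ⊆ B) :
    IsStarlikeWrt Ω B' :=
  fun z hz => (convexHull_mono (union_subset_union_right _ hB)).trans (h z hz)

variable [TopologicalSpace E] [ContinuousAdd E] [ContinuousConstSMul ℝ E]

lemma IsStarlikeWrt.closure {Ω B : Set E} (h : IsStarlikeWrt Ω B) :
    IsStarlikeWrt (closure Ω) B := by
  intro y hy
  rcases B.eq_empty_or_nonempty with rfl | hB
  · simpa using hy
  rw [← insert_eq, convexHull_insert hB]
  rintro x hx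
  obtain ⟨_, rfl, b, hb, a, a', ha, ha', haa', rfl⟩ := mem_convexJoin.mp hx
  -- `w ↦ a • w + a' • b` maps `Ω` into itself (along a segment towards `conv B`), so also `closure Ω`.
  refine map_mem_closure (f := fun w => a • w + a' • b) (by fun_prop) hy fun w hw => h w hw ?_
  exact (convex_convexHull ℝ ({w} ∪ B)).segment_subset (subset_convexHull ℝ _ (Or.inl rfl))
    (convexHull_mono subset_union_right hb) ⟨a, a', ha, ha', haa', rfl⟩

end Starlike

lemma Gker_eq_zero_of_notMem_convexHull {n : ℕ} (θ : EuclideanSpace ℝ (Fin n) → ℝ) (m : ℕ)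
    {x y : EuclideanSpace ℝ (Fin n)} (hx : x ∉ convexHull ℝ ({y} ∪ tsupport θ)) :
    Gker θ m x y = 0 := by
  have hθ : ∀ t ∈ Ioi (1 : ℝ), θ (y + t • (x - y)) = 0 := by
    intro t ht
    by_contra hne
    exact hx <| segment_subset_convexHull (s := {y} ∪ tsupport θ) (Or.inl rfl)
      (Or.inr (subset_tsupport θ hne)) (mem_segment_add_smul_sub_of_one_le x y ht.le)
  rw [Gker, setIntegral_congr_fun (g := fun _ => 0) measurableSet_Ioi fun t ht => by simp [hθ t ht],
    integral_zero]

lemma integral_Gker_mul_eq_zero {n : ℕ} (θ : EuclideanSpace ℝ (Fin n) → ℝ) (m : ℕ) (j : Fin n)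
    (f : EuclideanSpace ℝ (Fin n) → ℝ) {x : EuclideanSpace ℝ (Fin n)}
    (hx : x ∉ ⋃ y ∈ tsupport f, convexHull ℝ ({y} ∪ tsupport θ)) :
    ∫ y, Gker θ m x y * (x j - y j) * f y = 0 := by
  have hzero : ∀ y, Gker θ m x y * (x j - y j) * f y = 0 := by
    intro y
    by_cases hfy : f y = 0
    · rw [hfy, mul_zero]
    · rw [Gker_eq_zero_of_notMem_convexHull θ m
        fun hxy => hx (mem_biUnion (subset_tsupport f hfy) hxy), zero_mul, zero_mul]
  simp only [hzero, integral_zero]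

theorem stmt4_general {n : ℕ} (θ : EuclideanSpace ℝ (Fin n) → ℝ)
    (ℓ : ℕ) (j : Fin n)
    (f : EuclideanSpace ℝ (Fin n) → ℝ) :
    -- vanishing outside the starlike hull of the support of f
    (∀ x : EuclideanSpace ℝ (Fin n),
        x ∉ ⋃ y ∈ tsupport f, convexHull ℝ ({y} ∪ tsupport θ) →
        (∫ y : EuclideanSpace ℝ (Fin n), Gker θ ℓ x y * (x j - y j) * f y) = 0) ∧
    -- support preservation on domains starlike with respect to a ball containing supp θ
    (∀ (Ω : Set (EuclideanSpace ℝ (Fin n))) (c : EuclideanSpace ℝ (Fin n)) (r : ℝ),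
        IsOpen Ω → Bornology.IsBounded Ω → 0 < r → tsupport θ ⊆ Metric.ball c r →
        (∀ z ∈ Ω, convexHull ℝ ({z} ∪ Metric.ball c r) ⊆ Ω) →
        tsupport f ⊆ closure Ω →
        tsupport (fun x : EuclideanSpace ℝ (Fin n) =>
            ∫ y : EuclideanSpace ℝ (Fin n), Gker θ ℓ x y * (x j - y j) * f y)
          ⊆ closure Ω) := by
  refine ⟨fun x hx => integral_Gker_mul_eq_zero θ ℓ j f hx, ?_⟩
  intro Ω c r _ _ _ hθB hΩ hfΩ
  have hstar : IsStarlikeWrt (closure Ω) (tsupport θ) := (IsStarlikeWrt.closure hΩ).mono hθB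
  refine closure_minimal (fun x hx => ?_) isClosed_closure
  by_contra hxΩ
  refine hx (integral_Gker_mul_eq_zero θ ℓ j f ?_)
  simp only [mem_iUnion, not_exists]
  exact fun y hy hxy => hxΩ (hstar y (hfΩ hy) hxy)

theorem stmt4 {n : ℕ} (hn : 1 ≤ n) (θ : EuclideanSpace ℝ (Fin n) → ℝ)
    (hθ : ContDiff ℝ (⊤ : ℕ∞) θ) (hθc : HasCompactSupport θ)
    (ℓ : ℕ) (hℓ1 : 1 ≤ ℓ) (hℓn : ℓ ≤ n) (j : Fin n)
    (f : EuclideanSpace ℝ (Fin n) → ℝ) (hf : Continuous f) (hfc : HasCompactSupport f) :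
    -- vanishing outside the starlike hull of the support of f
    (∀ x : EuclideanSpace ℝ (Fin n),
        x ∉ ⋃ y ∈ tsupport f, convexHull ℝ ({y} ∪ tsupport θ) →
        (∫ y : EuclideanSpace ℝ (Fin n), Gker θ ℓ x y * (x j - y j) * f y) = 0) ∧
    -- support preservation on domains starlike with respect to a ball containing supp θ
    (∀ (Ω : Set (EuclideanSpace ℝ (Fin n))) (c : EuclideanSpace ℝ (Fin n)) (r : ℝ),
        IsOpen Ω → Bornology.IsBounded Ω → 0 < r → tsupport θ ⊆ Metric.ball c r →
        (∀ z ∈ Ω, convexHull ℝ ({z} ∪ Metric.ball c r) ⊆ Ω) →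
        tsupport f ⊆ closure Ω →
        tsupport (fun x : EuclideanSpace ℝ (Fin n) =>
            ∫ y : EuclideanSpace ℝ (Fin n), Gker θ ℓ x y * (x j - y j) * f y)
          ⊆ closure Ω) :=
  stmt4_general θ ℓ j f

end
end

section
/- The Bogovskiĭ-type operator is a pseudodifferential operator of order −1: let j, ℓ ∈ {1,…,n} and define k₀(x,z) = z_j ∫₀¹ s^{n−ℓ}(s+1)^{ℓ−1} θ(x+sz) ds and k₁(x,z) = z_j ∫₁^∞ s^{n−ℓ}(s+1)^{ℓ−1} θ(x+sz) ds for x, z ∈ ℝⁿ. Then: (i) k₀ is C^∞ on ℝⁿ × ℝⁿ; (ii) for each x ∈ ℝⁿ the function z ↦ k₁(x,z) is Lebesgue integrable on ℝⁿ, so its Fourier transform in z, k̂₁(x,ξ) = ∫_{ℝⁿ} e^{−i⟨ξ,z⟩} k₁(x,z) dz, is well defined; (iii) for every f ∈ C_c^∞(ℝⁿ) and every x ∈ ℝⁿ, ∫_{ℝⁿ} G_ℓ(x,y)(x_j − y_j) f(y) dy = ∫_{ℝⁿ} k₀(x, x−y) f(y) dy + (2π)^{−n} ∫_{ℝⁿ}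 e^{i⟨ξ,x⟩} k̂₁(x,ξ) f̂(ξ) dξ, where f̂(ξ) = ∫ e^{−i⟨ξ,y⟩} f(y) dy; here G_ℓ(x,y)(x_j − y_j) = k₀(x,x−y) + k₁(x,x−y). -/
/-!
Substituting `t = s + 1` in `G_ℓ` and cutting `∫₀^∞` at `s = 1` splits
`G_ℓ(x,y)(x_j - y_j)` into `k₀(x, x-y) + k₁(x, x-y)`. The near part `k₀` is an integral over the
compact interval `[0,1]` of a smooth integrand, hence smooth. For the far part, the scaling
`z ↦ s z` gives `∫ |z_j θ(x + s z)| dz = s^{-n-1} ∫ |u_j θ(x + u)| du`, and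
`s^{n-ℓ}(s+1)^{ℓ-1} s^{-n-1} = O(s^{-2})` because `1 ≤ ℓ ≤ n`; so `k₁(x,·)` is integrable by
Tonelli. Finally `∫ k₁(x, x-y) f(y) dy` is the convolution `k₁(x,·) ⋆ f` at `x`, whose Fourier
transform `k̂₁ f̂` is integrable since `f` is a Schwartz function, and Fourier inversion gives
the oscillatory integral.
-/

open MeasureTheory Set
open scoped Real RealInnerProductSpace

noncomputable section

/-- `k₀(x,z) = z_j ∫₀¹ s^{n−ℓ}(s+1)^{ℓ−1} θ(x+sz) ds`. -/
def kzero {n : ℕ} (θ : EuclideanSpace ℝ (Fin n) → ℝ) (ℓ : ℕ) (j : Fin n)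
    (x z : EuclideanSpace ℝ (Fin n)) : ℝ :=
  z j * ∫ s in (0 : ℝ)..1, s ^ (n - ℓ) * (s + 1) ^ (ℓ - 1) * θ (x + s • z)

/-- `k₁(x,z) = z_j ∫₁^∞ s^{n−ℓ}(s+1)^{ℓ−1} θ(x+sz) ds`. -/
def kone {n : ℕ} (θ : EuclideanSpace ℝ (Fin n) → ℝ) (ℓ : ℕ) (j : Fin n)
    (x z : EuclideanSpace ℝ (Fin n)) : ℝ :=
  z j * ∫ s in Set.Ioi (1 : ℝ), s ^ (n - ℓ) * (s + 1) ^ (ℓ - 1) * θ (x + s • z)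

/-- The Fourier transform of `k₁(x,·)`:  `k̂₁(x,ξ) = ∫ e^{−i⟨ξ,z⟩} k₁(x,z) dz`. -/
def koneHat {n : ℕ} (θ : EuclideanSpace ℝ (Fin n) → ℝ) (ℓ : ℕ) (j : Fin n)
    (x ξ : EuclideanSpace ℝ (Fin n)) : ℂ :=
  ∫ z : EuclideanSpace ℝ (Fin n),
    Complex.exp (-Complex.I * ((⟪ξ, z⟫ : ℝ) : ℂ)) * ((kone θ ℓ j x z : ℝ) : ℂ)

open Metric FourierTransform
open scoped ContDiff Convolution

universe u

section ParametricIntegral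

variable {E : Type u} [NormedAddCommGroup E] [NormedSpace ℝ E] [FiniteDimensional ℝ E]

theorem hasFDerivAt_intervalIntegral_of_contDiff {F : Type*} [NormedAddCommGroup F]
    [NormedSpace ℝ F] {f : E × ℝ → F} (hf : ContDiff ℝ 1 f) (a b : ℝ) (x₀ : E) :
    HasFDerivAt (fun x => ∫ s in a..b, f (x, s))
      (∫ s in a..b, (fderiv ℝ f (x₀, s)).comp (ContinuousLinearMap.inl ℝ E ℝ)) x₀ := by
  have hD : Continuous fun p => (fderiv ℝ f p).comp (ContinuousLinearMap.inl ℝ E ℝ) :=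
    (hf.continuous_fderiv one_ne_zero).clm_comp continuous_const
  obtain ⟨C, hC⟩ := ((isCompact_closedBall x₀ 1).prod isCompact_uIcc).exists_bound_of_continuousOn
    (hD.continuousOn (s := closedBall x₀ 1 ×ˢ uIcc a b))
  refine intervalIntegral.hasFDerivAt_integral_of_dominated_of_fderiv_le (μ := volume)
    (F := fun x s => f (x, s)) (F' := fun x s => (fderiv ℝ f (x, s)).comp (.inl ℝ E ℝ))
    (bound := fun _ => C) (ball_mem_nhds x₀ one_pos) ?_ ?_ ?_ ?_ intervalIntegrable_const ?_
  · exact .of_forall fun x => (hf.continuous.comp (.prodMk_right x)).aestronglyMeasurable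
  · exact (hf.continuous.comp (.prodMk_right x₀)).intervalIntegrable a b
  · exact (hD.comp (.prodMk_right x₀)).aestronglyMeasurable
  · exact .of_forall fun s hs x hx =>
      hC (x, s) ⟨ball_subset_closedBall hx, uIoc_subset_uIcc hs⟩
  · exact .of_forall fun s _ x _ =>
      (hf.differentiable one_ne_zero (x, s)).hasFDerivAt.comp x (hasFDerivAt_prodMk_left x s)

/-- `F` shares the universe of `E` so that the induction can pass from `F` to `E →L[ℝ] F`. -/
theorem contDiff_intervalIntegral_of_contDiff (a b : ℝ) (N : ℕ) :
    ∀ {F : Type u} [NormedAddCommGroup F] [NormedSpace ℝ F] [CompleteSpace F] {f : E × ℝ → F},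
      ContDiff ℝ N f → ContDiff ℝ N (fun x => ∫ s in a..b, f (x, s)) := by
  induction N with
  | zero =>
    intro F _ _ _ f hf
    rw [Nat.cast_zero, contDiff_zero] at hf ⊢
    exact intervalIntegral.continuous_parametric_intervalIntegral_of_continuous'
      (f := fun x s => f (x, s)) hf a b
  | succ N ih =>
    intro F _ _ _ f hf
    have hf1 : ContDiff ℝ 1 f := hf.of_le (by exact_mod_cast N.succ_pos)
    push_cast
    rw [contDiff_succ_iff_fderiv]
    refine ⟨fun x => (hasFDerivAt_intervalIntegral_of_contDiff hf1 a b x).differentiableAt,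
      by simp, ?_⟩
    rw [funext fun x => (hasFDerivAt_intervalIntegral_of_contDiff hf1 a b x).fderiv]
    exact ih ((hf.fderiv_right le_rfl).clm_comp contDiff_const)

theorem contDiff_infty_intervalIntegral_of_contDiff {F : Type u} [NormedAddCommGroup F]
    [NormedSpace ℝ F] [CompleteSpace F] {f : E × ℝ → F} (hf : ContDiff ℝ ∞ f) (a b : ℝ) :
    ContDiff ℝ ∞ (fun x => ∫ s in a..b, f (x, s)) :=
  contDiff_infty.2 fun N => contDiff_intervalIntegral_of_contDiff a b N (hf.of_le (mod_cast le_top))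

end ParametricIntegral

section Fourier

variable {V : Type*} [NormedAddCommGroup V] [InnerProductSpace ℝ V]

theorem exp_I_mul_inner_eq_fourierChar (ξ x : V) :
    Complex.exp (Complex.I * ((⟪ξ, x⟫ : ℝ) : ℂ)) = 𝐞 ⟪(2 * π)⁻¹ • ξ, x⟫ := by
  rw [Real.fourierChar_apply, real_inner_smul_left]
  congr 1
  push_cast
  field_simp

variable [FiniteDimensional ℝ V] [MeasurableSpace V] [BorelSpace V]

theorem integral_exp_neg_inner_mul_eq_fourier (g : V → ℂ) (ξ : V) :
    ∫ z, Complex.exp (-Complex.I * ((⟪ξ, z⟫ : ℝ) : ℂ)) * g z = 𝓕 g ((2 * π)⁻¹ • ξ) := by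
  rw [Real.fourier_eq']
  congr 1 with z
  rw [smul_eq_mul, real_inner_smul_right, real_inner_comm]
  congr 2
  push_cast
  field_simp

theorem integral_sub_mul_eq_integral_fourierChar_mul_fourier {K F : V → ℂ} (hK : Integrable K)
    (hF : ContDiff ℝ ∞ F) (hFc : HasCompactSupport F) (x : V) :
    ∫ y, K (x - y) * F y = ∫ w, 𝐞 ⟪w, x⟫ * (𝓕 K w * 𝓕 F w) := by
  have hFint : Integrable F := hF.continuous.integrable_of_hasCompactSupport hFc
  have h𝓕F : Integrable (𝓕 F) := (𝓕 (hFc.toSchwartzMap hF)).integrable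
  have h𝓕K : Continuous (𝓕 K) :=
    VectorFourier.fourierIntegral_continuous Real.continuous_fourierChar
      continuous_inner hK
  set G := K ⋆[ContinuousLinearMap.mul ℂ ℂ] F
  have hG : Continuous G := hFc.continuous_convolution_right _ hK.locallyIntegrable hF.continuous
  have h𝓕G : 𝓕 G = 𝓕 K * 𝓕 F := funext (Real.fourier_mul_convolution_eq hK hFint)
  have h𝓕Gint : Integrable (𝓕 G) := by
    rw [h𝓕G]
    exact h𝓕F.bdd_mul h𝓕K.aestronglyMeasurable (.of_forall fun w =>
      VectorFourier.norm_fourierIntegral_le_integral_norm _ _ _ _ w)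
  calc ∫ y, K (x - y) * F y = G x := convolution_mul_swap.symm
    _ = 𝓕⁻ (𝓕 G) x := by rw [hG.fourierInv_fourier_eq (hK.integrable_convolution _ hFint) h𝓕Gint]
    _ = ∫ w, 𝐞 ⟪w, x⟫ * (𝓕 K w * 𝓕 F w) := by
      simp only [Real.fourierInv_eq, h𝓕G, Circle.smul_def, Pi.mul_apply, smul_eq_mul]

theorem integral_sub_mul_eq_inv_two_pi_pow_mul_integral {K F : V → ℂ} (hK : Integrable K)
    (hF : ContDiff ℝ ∞ F) (hFc : HasCompactSupport F) (x : V) :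
    ∫ y, K (x - y) * F y =
      ((((2 * π) ^ Module.finrank ℝ V)⁻¹ : ℝ) : ℂ) *
        ∫ ξ, Complex.exp (Complex.I * ((⟪ξ, x⟫ : ℝ) : ℂ)) *
          (∫ z, Complex.exp (-Complex.I * ((⟪ξ, z⟫ : ℝ) : ℂ)) * K z) *
            ∫ y, Complex.exp (-Complex.I * ((⟪ξ, y⟫ : ℝ) : ℂ)) * F y := by
  simp_rw [integral_exp_neg_inner_mul_eq_fourier, exp_I_mul_inner_eq_fourierChar, mul_assoc]
  rw [Measure.integral_comp_inv_smul_of_nonneg volume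
    (fun w => (𝐞 ⟪w, x⟫ : ℂ) * (𝓕 K w * 𝓕 F w)) Real.two_pi_pos.le,
    integral_sub_mul_eq_integral_fourierChar_mul_fourier hK hF hFc, ← Complex.coe_smul,
    smul_eq_mul, ← mul_assoc, ← Complex.ofReal_mul, inv_mul_cancel₀ (by positivity),
    Complex.ofReal_one, one_mul]

end Fourier

section CompactSupport

variable {E F : Type*} [NormedAddCommGroup E] [NormedSpace ℝ E] [Zero F] {θ : E → F}

theorem HasCompactSupport.comp_add_smul_left (hθc : HasCompactSupport θ) (x : E) {z : E}
    (hz : z ≠ 0) : HasCompactSupport fun s : ℝ => θ (x + s • z) :=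
  hθc.comp_isClosedEmbedding
    ((Homeomorph.addLeft x).isClosedEmbedding.comp (isClosedEmbedding_smul_left hz))

theorem HasCompactSupport.comp_add_smul_right (hθc : HasCompactSupport θ) (x : E) {s : ℝ}
    (hs : s ≠ 0) : HasCompactSupport fun z : E => θ (x + s • z) :=
  hθc.comp_homeomorph ((Homeomorph.smulOfNeZero s hs).trans (Homeomorph.addLeft x))

end CompactSupport

section Kernel

variable {n : ℕ} {θ : EuclideanSpace ℝ (Fin n) → ℝ}

theorem Gker_eq_integral_Ioi_zero (m : ℕ) (x y : EuclideanSpace ℝ (Fin n)) :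
    Gker θ m x y = ∫ s in Ioi 0, s ^ (n - m) * (s + 1) ^ (m - 1) * θ (x + s • (x - y)) := by
  have hshift : ∀ s : ℝ, y + (s + 1) • (x - y) = x + s • (x - y) := fun s => by module
  rw [Gker, ← (measurePreserving_add_right volume (1 : ℝ)).setIntegral_preimage_emb
    (measurableEmbedding_addRight 1)]
  simp [hshift]

theorem Gker_mul_sub_eq_kzero_add_kone (hθ : Continuous θ) (hθc : HasCompactSupport θ) (ℓ : ℕ)
    (j : Fin n) (x y : EuclideanSpace ℝ (Fin n)) :
    Gker θ ℓ x y * (x j - y j) = kzero θ ℓ j x (x - y) + kone θ ℓ j x (x - y) := by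
  rcases eq_or_ne (x - y) 0 with hxy | hxy
  · rw [sub_eq_zero] at hxy
    subst hxy
    simp [kzero, kone]
  · have hcont : Continuous fun s : ℝ => s ^ (n - ℓ) * (s + 1) ^ (ℓ - 1) * θ (x + s • (x - y)) := by
      fun_prop
    rw [Gker_eq_integral_Ioi_zero, ← intervalIntegral.integral_interval_add_Ioi'
      (hcont.intervalIntegrable 0 1) (hcont.integrable_of_hasCompactSupport
        ((hθc.comp_add_smul_left x hxy).mul_left)).integrableOn, kzero, kone, PiLp.sub_apply]
    ring

theorem integral_norm_coord_mul_mul_comp_add_smul (c : ℝ) (j : Fin n)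
    (x : EuclideanSpace ℝ (Fin n)) {s : ℝ} (hs : 0 < s) :
    ∫ z, ‖z j * (c * θ (x + s • z))‖ = |c| / s ^ (n + 1) * ∫ u, |u j| * |θ (x + u)| := by
  have hscale : ∀ z : EuclideanSpace ℝ (Fin n),
      ‖z j * (c * θ (x + s • z))‖ = |c| / s * (|(s • z) j| * |θ (x + s • z)|) := by
    intro z
    rw [PiLp.smul_apply, smul_eq_mul, Real.norm_eq_abs, abs_mul, abs_mul, abs_mul,
      abs_of_pos hs]
    field_simp
  simp_rw [hscale]
  rw [integral_const_mul, Measure.integral_comp_smul_of_nonneg volume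
    (fun u => |u j| * |θ (x + u)|) s (hR := hs.le), finrank_euclideanSpace_fin, smul_eq_mul,
    pow_succ]
  field_simp

theorem integrable_coord_mul_integral_Ioi_one (hθ : Continuous θ) (hθc : HasCompactSupport θ)
    {w : ℝ → ℝ} (hw : Continuous w) (hw_int : IntegrableOn (fun s => w s / s ^ (n + 1)) (Ioi 1))
    (j : Fin n) (x : EuclideanSpace ℝ (Fin n)) :
    Integrable fun z => z j * ∫ s in Ioi 1, w s * θ (x + s • z) := by
  set Φ : EuclideanSpace ℝ (Fin n) × ℝ → ℝ := fun p => p.1 j * (w p.2 * θ (x + p.2 • p.1))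
  have hΦ : Continuous Φ := by fun_prop
  have hprod : Integrable Φ (volume.prod (volume.restrict (Ioi 1))) := by
    rw [integrable_prod_iff' hΦ.aestronglyMeasurable]
    constructor
    · refine (ae_restrict_iff' measurableSet_Ioi).2 (.of_forall fun s (hs : 1 < s) => ?_)
      exact (hΦ.comp (.prodMk_left s)).integrable_of_hasCompactSupport
        (hθc.comp_add_smul_right x (by positivity)).mul_left.mul_left
    · refine IntegrableOn.congr_fun (hw_int.norm.mul_const (∫ u, |u j| * |θ (x + u)|))
        (fun s (hs : 1 < s) => ?_) measurableSet_Ioi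
      simp only [Φ]
      rw [integral_norm_coord_mul_mul_comp_add_smul _ j x (by positivity), Real.norm_eq_abs,
        abs_div, abs_of_pos (by positivity : 0 < s ^ (n + 1))]
  exact hprod.integral_prod_left.congr (.of_forall fun z => by simp only [Φ, integral_const_mul])

theorem integrableOn_Ioi_one_pow_mul_add_one_pow_div {n ℓ : ℕ} (hℓ1 : 1 ≤ ℓ) (hℓn : ℓ ≤ n) :
    IntegrableOn (fun s : ℝ => s ^ (n - ℓ) * (s + 1) ^ (ℓ - 1) / s ^ (n + 1)) (Ioi 1) := by
  have hsq : IntegrableOn (fun s : ℝ => 2 ^ (ℓ - 1) * s ^ (-2 : ℝ)) (Ioi 1) :=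
    (integrableOn_Ioi_rpow_of_lt (by norm_num) one_pos).const_mul _
  refine hsq.mono' (Measurable.aestronglyMeasurable (by fun_prop))
    ((ae_restrict_iff' measurableSet_Ioi).2 (.of_forall fun s (hs : 1 < s) => ?_))
  have hs0 : 0 < s := by linarith
  have hweight : s ^ (n - ℓ) * (s + 1) ^ (ℓ - 1) ≤ 2 ^ (ℓ - 1) * s ^ (n - 1) := calc
    _ ≤ s ^ (n - ℓ) * (2 * s) ^ (ℓ - 1) := by gcongr; linarith
    _ = 2 ^ (ℓ - 1) * s ^ (n - 1) := by
      rw [mul_pow, show n - 1 = n - ℓ + (ℓ - 1) by omega, pow_add]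
      ring
  rw [Real.norm_of_nonneg (by positivity), Real.rpow_neg hs0.le, Real.rpow_two,
    show n + 1 = n - 1 + 2 by omega, pow_add, div_le_iff₀ (by positivity)]
  calc _ ≤ 2 ^ (ℓ - 1) * s ^ (n - 1) := hweight
    _ = _ := by field_simp

theorem integrable_kone (hθ : Continuous θ) (hθc : HasCompactSupport θ) {ℓ : ℕ} (hℓ1 : 1 ≤ ℓ)
    (hℓn : ℓ ≤ n) (j : Fin n) (x : EuclideanSpace ℝ (Fin n)) :
    Integrable (kone θ ℓ j x) :=
  integrable_coord_mul_integral_Ioi_one hθ hθc (w := fun s => s ^ (n - ℓ) * (s + 1) ^ (ℓ - 1))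
    (by fun_prop) (integrableOn_Ioi_one_pow_mul_add_one_pow_div hℓ1 hℓn) j x

theorem contDiff_kzero (hθ : ContDiff ℝ ∞ θ) (ℓ : ℕ) (j : Fin n) :
    ContDiff ℝ ∞ fun p : EuclideanSpace ℝ (Fin n) × EuclideanSpace ℝ (Fin n) =>
      kzero θ ℓ j p.1 p.2 := by
  have hintegrand : ContDiff ℝ ∞
      fun q : (EuclideanSpace ℝ (Fin n) × EuclideanSpace ℝ (Fin n)) × ℝ =>
        q.2 ^ (n - ℓ) * (q.2 + 1) ^ (ℓ - 1) * θ (q.1.1 + q.2 • q.1.2) := by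
    fun_prop
  exact ((EuclideanSpace.proj j).contDiff.comp contDiff_snd).mul
    (contDiff_infty_intervalIntegral_of_contDiff hintegrand 0 1)

theorem integral_Gker_mul_sub_mul_eq (hθ : ContDiff ℝ ∞ θ) (hθc : HasCompactSupport θ) {ℓ : ℕ}
    (hℓ1 : 1 ≤ ℓ) (hℓn : ℓ ≤ n) (j : Fin n) {f : EuclideanSpace ℝ (Fin n) → ℝ}
    (hf : ContDiff ℝ ∞ f) (hfc : HasCompactSupport f) (x : EuclideanSpace ℝ (Fin n)) :
    (((∫ y : EuclideanSpace ℝ (Fin n), Gker θ ℓ x y * (x j - y j) * f y : ℝ)) : ℂ) =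
      (((∫ y : EuclideanSpace ℝ (Fin n), kzero θ ℓ j x (x - y) * f y : ℝ)) : ℂ) +
        ((((2 * Real.pi) ^ n)⁻¹ : ℝ) : ℂ) *
          ∫ ξ : EuclideanSpace ℝ (Fin n),
            Complex.exp (Complex.I * ((⟪ξ, x⟫ : ℝ) : ℂ)) * koneHat θ ℓ j x ξ *
              ∫ y : EuclideanSpace ℝ (Fin n),
                Complex.exp (-Complex.I * ((⟪ξ, y⟫ : ℝ) : ℂ)) * ((f y : ℝ) : ℂ) := by
  have hk₀cont : Continuous fun y => kzero θ ℓ j x (x - y) * f y :=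
    ((contDiff_kzero hθ ℓ j).continuous.comp (f := fun y => (x, x - y)) (by fun_prop)).mul
      hf.continuous
  have hk₀ : Integrable fun y => kzero θ ℓ j x (x - y) * f y :=
    hk₀cont.integrable_of_hasCompactSupport hfc.mul_left
  have hk₁ : Integrable fun y => kone θ ℓ j x (x - y) * f y :=
    ((integrable_kone hθ.continuous hθc hℓ1 hℓn j x).comp_sub_left x).locallyIntegrable
      |>.integrable_smul_right_of_hasCompactSupport hf.continuous hfc
  have hsplit : ∫ y, Gker θ ℓ x y * (x j - y j) * f y =
      (∫ y, kzero θ ℓ j x (x - y) * f y) + ∫ y, kone θ ℓ j x (x - y) * f y := by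
    rw [← integral_add hk₀ hk₁]
    congr 1 with y
    rw [Gker_mul_sub_eq_kzero_add_kone hθ.continuous hθc, add_mul]
  have hfourier := integral_sub_mul_eq_inv_two_pi_pow_mul_integral
    (K := fun z => (kone θ ℓ j x z : ℂ)) (F := fun y => (f y : ℂ))
    (integrable_kone hθ.continuous hθc hℓ1 hℓn j x).ofReal (Complex.ofRealCLM.contDiff.comp hf)
    (hfc.comp_left Complex.ofReal_zero) x
  rw [finrank_euclideanSpace_fin] at hfourier
  unfold koneHat
  rw [hsplit, Complex.ofReal_add, ← hfourier]
  congr 1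
  rw [← integral_complex_ofReal]
  simp only [Complex.ofReal_mul]

end Kernel

theorem stmt9_general {n : ℕ} (θ : EuclideanSpace ℝ (Fin n) → ℝ)
    (hθ : ContDiff ℝ (⊤ : ℕ∞) θ) (hθc : HasCompactSupport θ)
    (ℓ : ℕ) (hℓ1 : 1 ≤ ℓ) (hℓn : ℓ ≤ n) (j : Fin n) :
    -- (i)
    (ContDiff ℝ (⊤ : ℕ∞) fun p : EuclideanSpace ℝ (Fin n) × EuclideanSpace ℝ (Fin n) =>
      kzero θ ℓ j p.1 p.2) ∧
    -- (ii)
    (∀ x : EuclideanSpace ℝ (Fin n), Integrable (fun z => kone θ ℓ j x z)) ∧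
    -- (iii)
    (∀ f : EuclideanSpace ℝ (Fin n) → ℝ, ContDiff ℝ (⊤ : ℕ∞) f → HasCompactSupport f →
      ∀ x : EuclideanSpace ℝ (Fin n),
        (((∫ y : EuclideanSpace ℝ (Fin n), Gker θ ℓ x y * (x j - y j) * f y : ℝ)) : ℂ) =
          (((∫ y : EuclideanSpace ℝ (Fin n), kzero θ ℓ j x (x - y) * f y : ℝ)) : ℂ) +
            ((((2 * Real.pi) ^ n)⁻¹ : ℝ) : ℂ) *
              ∫ ξ : EuclideanSpace ℝ (Fin n),
                Complex.exp (Complex.I * ((⟪ξ, x⟫ : ℝ) : ℂ)) * koneHat θ ℓ j x ξ *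
                  ∫ y : EuclideanSpace ℝ (Fin n),
                    Complex.exp (-Complex.I * ((⟪ξ, y⟫ : ℝ) : ℂ)) * ((f y : ℝ) : ℂ)) ∧
    -- the kernel splitting
    (∀ x y : EuclideanSpace ℝ (Fin n), x ≠ y →
      Gker θ ℓ x y * (x j - y j) = kzero θ ℓ j x (x - y) + kone θ ℓ j x (x - y)) :=
  ⟨contDiff_kzero hθ ℓ j, integrable_kone hθ.continuous hθc hℓ1 hℓn j,
    fun _ hf hfc x => integral_Gker_mul_sub_mul_eq hθ hθc hℓ1 hℓn j hf hfc x,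
    fun x y _ => Gker_mul_sub_eq_kzero_add_kone hθ.continuous hθc ℓ j x y⟩

theorem stmt9 {n : ℕ} (hn : 1 ≤ n) (θ : EuclideanSpace ℝ (Fin n) → ℝ)
    (hθ : ContDiff ℝ (⊤ : ℕ∞) θ) (hθc : HasCompactSupport θ)
    (ℓ : ℕ) (hℓ1 : 1 ≤ ℓ) (hℓn : ℓ ≤ n) (j : Fin n) :
    -- (i)
    (ContDiff ℝ (⊤ : ℕ∞) fun p : EuclideanSpace ℝ (Fin n) × EuclideanSpace ℝ (Fin n) =>
      kzero θ ℓ j p.1 p.2) ∧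
    -- (ii)
    (∀ x : EuclideanSpace ℝ (Fin n), Integrable (fun z => kone θ ℓ j x z)) ∧
    -- (iii)
    (∀ f : EuclideanSpace ℝ (Fin n) → ℝ, ContDiff ℝ (⊤ : ℕ∞) f → HasCompactSupport f →
      ∀ x : EuclideanSpace ℝ (Fin n),
        (((∫ y : EuclideanSpace ℝ (Fin n), Gker θ ℓ x y * (x j - y j) * f y : ℝ)) : ℂ) =
          (((∫ y : EuclideanSpace ℝ (Fin n), kzero θ ℓ j x (x - y) * f y : ℝ)) : ℂ) +
            ((((2 * Real.pi) ^ n)⁻¹ : ℝ) : ℂ) *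
              ∫ ξ : EuclideanSpace ℝ (Fin n),
                Complex.exp (Complex.I * ((⟪ξ, x⟫ : ℝ) : ℂ)) * koneHat θ ℓ j x ξ *
                  ∫ y : EuclideanSpace ℝ (Fin n),
                    Complex.exp (-Complex.I * ((⟪ξ, y⟫ : ℝ) : ℂ)) * ((f y : ℝ) : ℂ)) ∧
    -- the kernel splitting
    (∀ x y : EuclideanSpace ℝ (Fin n), x ≠ y →
      Gker θ ℓ x y * (x j - y j) = kzero θ ℓ j x (x - y) + kone θ ℓ j x (x - y)) :=
  stmt9_general θ hθ hθc ℓ hℓ1 hℓn j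

end
end
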